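/- arXiv:1503.05993 — 2 statements merged into one kernel-verified Lean document; each statement's English description precedes it below -/
import Mathlib

section
/- Let S be a numerical semigroup on a compound sequence and i ∈ [0,p]. The Apéry set Ap(S, n_i) = {n ∈ S : n − n_i ∉ S} equals {Σ_j u_j n_j : u ∈ ℕ^{p+1}, u_j < b_{j+1} for j < i, u_i = 0, u_j < a_j for j > i}. -/
/-!
Call `u` a normal form for `i` if `u j < b (j + 1)` for `j < i` and `u j < a j` for `i < j ≤ p`.
Since `a (j + 1) * n (j + 1) = b (j + 1) * n j`, any representation `∑ u j * n j` of an element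
of `S` can be carried towards the index `i` until it is a normal form; each carry strictly
decreases `∑ u j * n j * 2 ^ |j - i|`, so this terminates. Two normal forms with the same value
agree: for `j > i` (downwards from `p`) read the equation modulo `a j ⋯ a p`, for `j < i`
(upwards from `0`) modulo `b 1 ⋯ b (j + 1)`; the coprimality of the `a`'s with the `b`'s of
smaller index then pins down `u j`, and finally `u i`. So `m ∈ S` lies in the Apéry set of `n i`
exactly when the `i`-th entry of its normal form vanishes.
-/

open Finset

section WeightedSum

variable {N : ℕ} (w : ℕ → ℕ)

lemma sum_add_single_mul {t : ℕ} (ht : t < N) (u : ℕ → ℕ) (d : ℕ) :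
    ∑ j ∈ range N, (u + Pi.single t d : ℕ → ℕ) j * w j = ∑ j ∈ range N, u j * w j + d * w t := by
  simp [add_mul, sum_add_distrib, Pi.single_apply, ht]

lemma sub_single_add_single {u : ℕ → ℕ} {s c : ℕ} (hc : c ≤ u s) :
    u - Pi.single s c + Pi.single s c = u := by
  funext j
  by_cases hj : j = s
  · subst hj; simp [hc]
  · simp [hj]

lemma sum_exchange {s t c : ℕ} (hs : s < N) (ht : t < N) {u : ℕ → ℕ} (hc : c ≤ u s) (d : ℕ) :
    ∑ j ∈ range N, (u - Pi.single s c + Pi.single t d : ℕ → ℕ) j * w j + c * w s =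
      ∑ j ∈ range N, u j * w j + d * w t := by
  rw [sum_add_single_mul w ht, add_right_comm, ← sum_add_single_mul w hs,
    sub_single_add_single hc]

lemma mul_modEq_of_sum_eq {j M : ℕ} {u v : ℕ → ℕ} (hj : j < N)
    (h : ∑ k ∈ range N, u k * w k = ∑ k ∈ range N, v k * w k)
    (hM : ∀ k < N, k ≠ j → u k ≠ v k → M ∣ w k) :
    u j * w j ≡ v j * w j [MOD M] := by
  rw [← add_sum_erase _ _ (mem_range.2 hj), ← add_sum_erase _ _ (mem_range.2 hj)] at h
  refine Nat.ModEq.add_right_cancel (Nat.ModEq.sum fun k hk => ?_) (by rw [h])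
  obtain ⟨hkj, hk⟩ := mem_erase.1 hk
  by_cases huv : u k = v k
  · rw [huv]
  · have hMk := hM k (mem_range.1 hk) hkj huv
    exact ((Nat.modEq_zero_iff_dvd.2 (dvd_mul_of_dvd_right hMk _)).trans
      (Nat.modEq_zero_iff_dvd.2 (dvd_mul_of_dvd_right hMk _)).symm)

lemma exists_carry {i s t c d : ℕ} (hs : s < N) (ht : t < N) (hst : t.dist i + 1 = s.dist i)
    (hcd : c * w s = d * w t) (hpos : 0 < c * w s) {x : ℕ → ℕ} (hc : c ≤ x s) :
    ∃ y : ℕ → ℕ, ∑ j ∈ range N, y j * w j = ∑ j ∈ range N, x j * w j ∧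
      ∑ j ∈ range N, y j * (w j * 2 ^ j.dist i) < ∑ j ∈ range N, x j * (w j * 2 ^ j.dist i) := by
  refine ⟨x - Pi.single s c + Pi.single t d, ?_, ?_⟩
  · have hexch := sum_exchange w hs ht hc d
    omega
  · have hexch := sum_exchange (fun j => w j * 2 ^ j.dist i) hs ht hc d
    have hdouble : c * (w s * 2 ^ s.dist i) = 2 * (d * (w t * 2 ^ t.dist i)) := by
      rw [← hst, pow_succ, ← mul_assoc, hcd]
      ring
    have hK : 0 < d * (w t * 2 ^ t.dist i) := by
      rw [← mul_assoc, ← hcd]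
      positivity
    omega

end WeightedSum

lemma Nat.eq_of_mul_modEq_mul {x y m c d : ℕ} (hx : x < m) (hy : y < m) (hc : m.Coprime c)
    (hd : d ≠ 0) (h : x * (c * d) ≡ y * (c * d) [MOD m * d]) : x = y := by
  rw [← mul_assoc, ← mul_assoc] at h
  exact ((Nat.ModEq.mul_right_cancel' hd h).cancel_right_of_coprime hc).eq_of_lt_of_lt hx hy

def compoundSeq (p : ℕ) (a b : ℕ → ℕ) (i : ℕ) : ℕ :=
  (∏ j ∈ Icc 1 i, b j) * ∏ j ∈ Icc (i + 1) p, a j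

section CompoundSequence

variable {p : ℕ} {a b : ℕ → ℕ}

lemma compoundSeq_pos (ha : ∀ j, 1 ≤ j → j ≤ p → 0 < a j) (hb : ∀ j, 1 ≤ j → j ≤ p → 0 < b j)
    {t : ℕ} (ht : t ≤ p) : 0 < compoundSeq p a b t := by
  refine Nat.mul_pos (prod_pos fun j hj => ?_) (prod_pos fun j hj => ?_) <;> rw [mem_Icc] at hj
  · exact hb j hj.1 (hj.2.trans ht)
  · exact ha j (by omega) hj.2

lemma mul_compoundSeq_succ {s : ℕ} (hs : s < p) :
    a (s + 1) * compoundSeq p a b (s + 1) = b (s + 1) * compoundSeq p a b s := by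
  unfold compoundSeq
  rw [prod_Icc_succ_top (by omega), ← mul_prod_Ioc_eq_prod_Icc (by omega : s + 1 ≤ p),
    Icc_add_one_left_eq_Ioc]
  ring

lemma prod_a_dvd_compoundSeq {j k : ℕ} (hkj : k < j) :
    ∏ l ∈ Icc j p, a l ∣ compoundSeq p a b k :=
  Dvd.dvd.mul_left (prod_dvd_prod_of_subset _ _ _ (Icc_subset_Icc (by omega) le_rfl)) _

lemma prod_b_dvd_compoundSeq {j k : ℕ} (hjk : j ≤ k) :
    ∏ l ∈ Icc 1 j, b l ∣ compoundSeq p a b k :=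
  Dvd.dvd.mul_right (prod_dvd_prod_of_subset _ _ _ (Icc_subset_Icc le_rfl hjk)) _

end CompoundSequence

structure IsNormalForm (p i : ℕ) (a b u : ℕ → ℕ) : Prop where
  lt_b : ∀ j, j < i → u j < b (j + 1)
  lt_a : ∀ j, i < j → j ≤ p → u j < a j

section NormalForm

variable {p i : ℕ} {a b : ℕ → ℕ}

lemma IsNormalForm.add_single {u : ℕ → ℕ} (hu : IsNormalForm p i a b u) (c : ℕ) :
    IsNormalForm p i a b (u + Pi.single i c) where
  lt_b j hj := by simpa [hj.ne] using hu.lt_b j hj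
  lt_a j hij hjp := by simpa [hij.ne'] using hu.lt_a j hij hjp

lemma exists_carry_of_not_isNormalForm (ha : ∀ j, 1 ≤ j → j ≤ p → 0 < a j)
    (hb : ∀ j, 1 ≤ j → j ≤ p → 0 < b j) (hip : i ≤ p) {x : ℕ → ℕ}
    (hx : ¬IsNormalForm p i a b x) :
    ∃ y : ℕ → ℕ,
      ∑ j ∈ range (p + 1), y j * compoundSeq p a b j =
        ∑ j ∈ range (p + 1), x j * compoundSeq p a b j ∧
      ∑ j ∈ range (p + 1), y j * (compoundSeq p a b j * 2 ^ j.dist i) <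
        ∑ j ∈ range (p + 1), x j * (compoundSeq p a b j * 2 ^ j.dist i) := by
  by_cases hlt_b : ∀ j, j < i → x j < b (j + 1)
  · obtain ⟨j, hij, hjp, hax⟩ : ∃ j, i < j ∧ j ≤ p ∧ a j ≤ x j := by
      by_contra! hlt_a
      exact hx ⟨hlt_b, hlt_a⟩
    obtain ⟨s, rfl⟩ : ∃ s, j = s + 1 := ⟨j - 1, by omega⟩
    exact exists_carry _ (by omega) (by omega) (by unfold Nat.dist; omega)
      (mul_compoundSeq_succ (by omega))
      (Nat.mul_pos (ha _ (by omega) hjp) (compoundSeq_pos ha hb hjp)) hax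
  · push Not at hlt_b
    obtain ⟨j, hji, hbx⟩ := hlt_b
    exact exists_carry _ (by omega) (by omega) (by unfold Nat.dist; omega)
      (mul_compoundSeq_succ (by omega)).symm
      (Nat.mul_pos (hb _ (by omega) (by omega)) (compoundSeq_pos ha hb (by omega))) hbx

lemma exists_isNormalForm_sum_eq (ha : ∀ j, 1 ≤ j → j ≤ p → 0 < a j)
    (hb : ∀ j, 1 ≤ j → j ≤ p → 0 < b j) (hip : i ≤ p) (x : ℕ → ℕ) :
    ∃ u : ℕ → ℕ, IsNormalForm p i a b u ∧
      ∑ j ∈ range (p + 1), u j * compoundSeq p a b j =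
        ∑ j ∈ range (p + 1), x j * compoundSeq p a b j := by
  induction hΦ : ∑ j ∈ range (p + 1), x j * (compoundSeq p a b j * 2 ^ j.dist i)
    using Nat.strong_induction_on generalizing x with
  | _ Φ ih =>
    by_cases hx : IsNormalForm p i a b x
    · exact ⟨x, hx, rfl⟩
    · obtain ⟨y, hyx, hyΦ⟩ := exists_carry_of_not_isNormalForm ha hb hip hx
      obtain ⟨u, hu, huy⟩ := ih _ (hΦ ▸ hyΦ) y rfl
      exact ⟨u, hu, huy.trans hyx⟩

lemma exists_isNormalForm_support_sum_eq (ha : ∀ j, 1 ≤ j → j ≤ p → 0 < a j)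
    (hb : ∀ j, 1 ≤ j → j ≤ p → 0 < b j) (hip : i ≤ p) (x : ℕ → ℕ) :
    ∃ u : ℕ → ℕ, IsNormalForm p i a b u ∧ (∀ j, p < j → u j = 0) ∧
      ∑ j ∈ range (p + 1), u j * compoundSeq p a b j =
        ∑ j ∈ range (p + 1), x j * compoundSeq p a b j := by
  obtain ⟨u, hu, hux⟩ := exists_isNormalForm_sum_eq ha hb hip x
  refine ⟨fun j => if j ≤ p then u j else 0, ⟨fun j hj => ?_, fun j hij hjp => ?_⟩,
    fun j hj => if_neg (by omega), ?_⟩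
  · simpa [show j ≤ p by omega] using hu.lt_b j hj
  · simpa [hjp] using hu.lt_a j hij hjp
  · rw [← hux]
    exact sum_congr rfl fun j hj => by simp [Nat.lt_succ_iff.1 (mem_range.1 hj)]

lemma IsNormalForm.eq_of_gt (ha : ∀ j, 1 ≤ j → j ≤ p → 0 < a j)
    (hab : ∀ i j, 1 ≤ j → j ≤ i → i ≤ p → Nat.gcd (a i) (b j) = 1) {u v : ℕ → ℕ}
    (hu : IsNormalForm p i a b u) (hv : IsNormalForm p i a b v)
    (h : ∑ j ∈ range (p + 1), u j * compoundSeq p a b j =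
      ∑ j ∈ range (p + 1), v j * compoundSeq p a b j) :
    ∀ j, i < j → j ≤ p → u j = v j := by
  intro j
  induction hd : p - j using Nat.strong_induction_on generalizing j with
  | _ d ih =>
    intro hij hjp
    have hmod : u j * compoundSeq p a b j ≡ v j * compoundSeq p a b j [MOD ∏ l ∈ Icc j p, a l] :=
      mul_modEq_of_sum_eq _ (by omega) h fun k hk hkj huv =>
        prod_a_dvd_compoundSeq (by
          by_contra! hjk
          exact huv (ih (p - k) (by omega) k rfl (by omega) (by omega)))
    rw [compoundSeq, ← mul_prod_Ioc_eq_prod_Icc hjp, ← Icc_add_one_left_eq_Ioc] at hmod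
    refine Nat.eq_of_mul_modEq_mul (hu.lt_a j hij hjp) (hv.lt_a j hij hjp)
      (Nat.Coprime.prod_right fun l hl => ?_) (prod_pos fun l hl => ?_).ne' hmod
    · rw [mem_Icc] at hl
      exact hab j l hl.1 hl.2 hjp
    · rw [mem_Icc] at hl
      exact ha l (by omega) hl.2

lemma IsNormalForm.eq_of_lt (hb : ∀ j, 1 ≤ j → j ≤ p → 0 < b j)
    (hab : ∀ i j, 1 ≤ j → j ≤ i → i ≤ p → Nat.gcd (a i) (b j) = 1) (hip : i ≤ p)
    {u v : ℕ → ℕ} (hu : IsNormalForm p i a b u) (hv : IsNormalForm p i a b v)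
    (h : ∑ j ∈ range (p + 1), u j * compoundSeq p a b j =
      ∑ j ∈ range (p + 1), v j * compoundSeq p a b j) :
    ∀ j, j < i → u j = v j := by
  intro j
  induction j using Nat.strong_induction_on with
  | _ j ih =>
    intro hji
    have hmod : u j * compoundSeq p a b j ≡ v j * compoundSeq p a b j
        [MOD ∏ l ∈ Icc 1 (j + 1), b l] :=
      mul_modEq_of_sum_eq _ (by omega) h fun k hk hkj huv =>
        prod_b_dvd_compoundSeq (by
          by_contra! hkj'
          exact huv (ih k (by omega) (by omega)))
    rw [compoundSeq, prod_Icc_succ_top (by omega), mul_comm (∏ l ∈ Icc 1 j, b l),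
      mul_comm (∏ l ∈ Icc 1 j, b l)] at hmod
    refine Nat.eq_of_mul_modEq_mul (hu.lt_b j hji) (hv.lt_b j hji)
      (Nat.Coprime.prod_right fun l hl => ?_) (prod_pos fun l hl => ?_).ne' hmod
    · rw [mem_Icc] at hl
      exact Nat.Coprime.symm (hab l (j + 1) (by omega) hl.1 hl.2)
    · rw [mem_Icc] at hl
      exact hb l hl.1 (by omega)

lemma IsNormalForm.eq_of_sum_eq (ha : ∀ j, 1 ≤ j → j ≤ p → 0 < a j)
    (hb : ∀ j, 1 ≤ j → j ≤ p → 0 < b j)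
    (hab : ∀ i j, 1 ≤ j → j ≤ i → i ≤ p → Nat.gcd (a i) (b j) = 1) (hip : i ≤ p)
    {u v : ℕ → ℕ} (hu : IsNormalForm p i a b u) (hv : IsNormalForm p i a b v)
    (h : ∑ j ∈ range (p + 1), u j * compoundSeq p a b j =
      ∑ j ∈ range (p + 1), v j * compoundSeq p a b j) :
    u i = v i := by
  have hmod : u i * compoundSeq p a b i ≡ v i * compoundSeq p a b i [MOD 0] :=
    mul_modEq_of_sum_eq _ (by omega) h fun k hk hki huv => absurd ?_ huv
  · exact Nat.eq_of_mul_eq_mul_right (compoundSeq_pos ha hb hip) (Nat.modEq_zero_iff.1 hmod)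
  · rcases lt_or_gt_of_ne hki with hki | hki
    · exact hu.eq_of_lt hb hab hip hv h k hki
    · exact hu.eq_of_gt ha hab hv h k hki (by omega)

end NormalForm

theorem stmt16_general (p : ℕ) (a b : ℕ → ℕ)
    (ha : ∀ i, 1 ≤ i → i ≤ p → 2 ≤ a i ∧ a i < b i)
    (hab : ∀ i j, 1 ≤ j → j ≤ i → i ≤ p → Nat.gcd (a i) (b j) = 1)
    (n : ℕ → ℕ)
    (hn : ∀ i, i ≤ p → n i = (∏ j ∈ Finset.Icc 1 i, b j) * ∏ j ∈ Finset.Icc (i+1) p, a j)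
    (i : ℕ) (hip : i ≤ p) :
    {m : ℕ | (∃ x : ℕ → ℕ, ∑ j ∈ Finset.range (p+1), x j * n j = m) ∧
        ¬∃ k : ℕ, (∃ x : ℕ → ℕ, ∑ j ∈ Finset.range (p+1), x j * n j = k) ∧
          k + n i = m} =
    {m : ℕ | ∃ u : ℕ → ℕ, (∀ j, j < i → u j < b (j+1)) ∧ u i = 0 ∧
        (∀ j, i < j → j ≤ p → u j < a j) ∧ (∀ j, p < j → u j = 0) ∧
        ∑ j ∈ Finset.range (p+1), u j * n j = m} := by
  have ha₀ : ∀ j, 1 ≤ j → j ≤ p → 0 < a j := fun j h₁ h₂ => by have := ha j h₁ h₂; omega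
  have hb₀ : ∀ j, 1 ≤ j → j ≤ p → 0 < b j := fun j h₁ h₂ => by have := ha j h₁ h₂; omega
  have hsum (x : ℕ → ℕ) : ∑ j ∈ range (p + 1), x j * n j =
      ∑ j ∈ range (p + 1), x j * compoundSeq p a b j :=
    sum_congr rfl fun j hj => by rw [hn j (Nat.lt_succ_iff.1 (mem_range.1 hj)), compoundSeq]
  have hni : n i = compoundSeq p a b i := hn i hip
  have hip' : i < p + 1 := Nat.lt_succ_of_le hip
  simp only [hsum, hni]
  ext m
  constructor
  · rintro ⟨⟨x, rfl⟩, hnot⟩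
    obtain ⟨u, hu, hzero, hux⟩ := exists_isNormalForm_support_sum_eq ha₀ hb₀ hip x
    refine ⟨u, hu.lt_b, ?_, hu.lt_a, hzero, hux⟩
    by_contra hui
    refine hnot ⟨_, ⟨u - Pi.single i 1, rfl⟩, ?_⟩
    rw [← hux, ← one_mul (compoundSeq p a b i), ← sum_add_single_mul _ hip',
      sub_single_add_single (by omega)]
  · rintro ⟨u, hlt_b, hui, hlt_a, -, rfl⟩
    refine ⟨⟨u, rfl⟩, ?_⟩
    rintro ⟨_, ⟨x, rfl⟩, hk⟩
    obtain ⟨v, hv, hvx⟩ := exists_isNormalForm_sum_eq ha₀ hb₀ hip x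
    have hvu := (hv.add_single 1).eq_of_sum_eq ha₀ hb₀ hab hip ⟨hlt_b, hlt_a⟩ (by
      rw [sum_add_single_mul _ hip', hvx, one_mul, hk])
    simp [hui] at hvu

theorem stmt16 (p : ℕ) (hp : 1 ≤ p) (a b : ℕ → ℕ)
    (ha : ∀ i, 1 ≤ i → i ≤ p → 2 ≤ a i ∧ a i < b i)
    (hab : ∀ i j, 1 ≤ j → j ≤ i → i ≤ p → Nat.gcd (a i) (b j) = 1)
    (n : ℕ → ℕ)
    (hn : ∀ i, i ≤ p → n i = (∏ j ∈ Finset.Icc 1 i, b j) * ∏ j ∈ Finset.Icc (i+1) p, a j)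
    (i : ℕ) (hip : i ≤ p) :
    {m : ℕ | (∃ x : ℕ → ℕ, ∑ j ∈ Finset.range (p+1), x j * n j = m) ∧
        ¬∃ k : ℕ, (∃ x : ℕ → ℕ, ∑ j ∈ Finset.range (p+1), x j * n j = k) ∧
          k + n i = m} =
    {m : ℕ | ∃ u : ℕ → ℕ, (∀ j, j < i → u j < b (j+1)) ∧ u i = 0 ∧
        (∀ j, i < j → j ≤ p → u j < a j) ∧ (∀ j, p < j → u j = 0) ∧
        ∑ j ∈ Finset.range (p+1), u j * n j = m} :=
  stmt16_general p a b ha hab n hn i hip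
end

section
/- Let S be a numerical semigroup on a compound sequence. Then the Frobenius number of S (the largest positive integer not in S) equals −n_0 + Σ_{j=1}^p n_j(a_j − 1). -/
/-!
Let `S_p ⊆ ℤ` be the set of `ℕ`-combinations of the `p + 1` generators at level `p`. Every
generator at level `p + 1` except the last is `a_{p+1}` times the corresponding one at level `p`,
so `S_{p+1} = a S_p + ℕ c` with `a = a_{p+1}` and `c = b_{p+1} n_p ∈ S_p` coprime to `a`.
Writing an integer as `a s + x c` with `0 ≤ x < a`, it lies in `a S_p + ℕ c` iff `s ∈ S_p`.
Hence the Frobenius numbers, taken in `ℤ` so that the one of `ℕ` is `-1`, satisfy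
`F_{p+1} = a F_p + (a - 1) c`, which unrolls to the closed formula.
-/

open Finset

section Gluing

variable {S : Set ℤ} {a c : ℤ}

def glue (S : Set ℤ) (a c : ℤ) : Set ℤ :=
  {m | ∃ s ∈ S, ∃ t : ℕ, a * s + t * c = m}

lemma exists_mul_add_mul_eq_of_isCoprime (ha : 0 < a) (hac : IsCoprime a c) (m : ℤ) :
    ∃ s x : ℤ, 0 ≤ x ∧ x < a ∧ a * s + x * c = m := by
  obtain ⟨u, v, huv⟩ := hac
  refine ⟨m * u + v * m / a * c, v * m % a, Int.emod_nonneg _ ha.ne', Int.emod_lt_of_pos _ ha, ?_⟩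
  linear_combination m * huv + c * Int.emod_def (v * m) a

lemma mul_add_mul_mem_glue_iff (ha : 0 < a) (hac : IsCoprime a c)
    (hS : ∀ s ∈ S, ∀ r : ℕ, s + r * c ∈ S) {s x : ℤ} (hx0 : 0 ≤ x) (hxa : x < a) :
    a * s + x * c ∈ glue S a c ↔ s ∈ S := by
  constructor
  · rintro ⟨s', hs', t, hst⟩
    -- `t ≡ x [ZMOD a]` with `0 ≤ t` and `x < a` forces `t = x + r a` with `r ≥ 0`
    obtain ⟨r, hr⟩ : a ∣ t - x :=
      hac.dvd_of_dvd_mul_right ⟨s - s', by linear_combination hst⟩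
    have hr0 : 0 ≤ r := by nlinarith
    lift r to ℕ using hr0
    have hs : s = s' + r * c := mul_left_cancel₀ ha.ne' (by linear_combination c * hr - hst)
    exact hs ▸ hS s' hs' r
  · intro hs
    lift x to ℕ using hx0
    exact ⟨s, hs, x, rfl⟩

lemma isGreatest_compl_glue {F : ℤ} (ha : 0 < a) (hc : 0 ≤ c) (hac : IsCoprime a c)
    (hS : ∀ s ∈ S, ∀ r : ℕ, s + r * c ∈ S) (hF : IsGreatest Sᶜ F) :
    IsGreatest (glue S a c)ᶜ (a * F + (a - 1) * c) := by
  refine ⟨(mul_add_mul_mem_glue_iff ha hac hS (by omega) (by omega)).not.mpr hF.1, ?_⟩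
  rintro m hm
  obtain ⟨s, x, hx0, hxa, rfl⟩ := exists_mul_add_mul_eq_of_isCoprime ha hac m
  have hsF : s ≤ F := hF.2 ((mul_add_mul_mem_glue_iff ha hac hS hx0 hxa).not.mp hm)
  nlinarith

end Gluing

section NatCombinations

variable {g g' : ℕ → ℤ} {p : ℕ}

def natCombinations (g : ℕ → ℤ) (p : ℕ) : Set ℤ :=
  {m | ∃ x : ℕ → ℕ, ∑ j ∈ range (p + 1), (x j : ℤ) * g j = m}

lemma natCombinations_congr (h : ∀ j ≤ p, g j = g' j) :
    natCombinations g p = natCombinations g' p := by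
  ext m
  refine exists_congr fun x => ?_
  rw [sum_congr rfl fun j hj => by rw [h j (Nat.lt_succ_iff.mp (mem_range.mp hj))]]

lemma natCast_mem_natCombinations_iff {g : ℕ → ℕ} {m : ℕ} :
    (m : ℤ) ∈ natCombinations (fun j => (g j : ℤ)) p ↔
      ∃ x : ℕ → ℕ, ∑ j ∈ range (p + 1), x j * g j = m := by
  simp only [natCombinations, Set.mem_ofPred_eq]
  exact_mod_cast Iff.rfl

lemma add_mul_mem_natCombinations {s : ℤ} (hs : s ∈ natCombinations g p) {j : ℕ} (hj : j ≤ p)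
    (r : ℕ) : s + r * g j ∈ natCombinations g p := by
  obtain ⟨x, rfl⟩ := hs
  refine ⟨fun i => x i + if i = j then r else 0, ?_⟩
  simp [add_mul, sum_add_distrib, hj]

lemma natCombinations_succ {a : ℤ} (hg : ∀ j ≤ p, g' j = a * g j) :
    natCombinations g' (p + 1) = glue (natCombinations g p) a (g' (p + 1)) := by
  have hsum (x : ℕ → ℕ) : ∑ j ∈ range (p + 1), (x j : ℤ) * g' j
      = a * ∑ j ∈ range (p + 1), (x j : ℤ) * g j := by
    rw [mul_sum]
    refine sum_congr rfl fun j hj => ?_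
    rw [hg j (Nat.lt_succ_iff.mp (mem_range.mp hj))]
    ring
  ext m
  constructor
  · rintro ⟨x, rfl⟩
    exact ⟨_, ⟨x, rfl⟩, x (p + 1), by rw [sum_range_succ _ (p + 1), hsum]⟩
  · rintro ⟨_, ⟨x, rfl⟩, t, rfl⟩
    refine ⟨Function.update x (p + 1) t, ?_⟩
    rw [sum_range_succ _ (p + 1), Function.update_self, ← hsum]
    congr 1
    refine sum_congr rfl fun j hj => ?_
    rw [Function.update_of_ne (by simp at hj; omega)]

end NatCombinations

section Compound

variable (a b : ℕ → ℕ)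

def compoundGen (p j : ℕ) : ℤ :=
  (∏ i ∈ Icc 1 j, (b i : ℤ)) * ∏ i ∈ Icc (j + 1) p, (a i : ℤ)

def compoundFrobenius (p : ℕ) : ℤ :=
  ∑ j ∈ Icc 1 p, ((a j : ℤ) - 1) * compoundGen a b p j - compoundGen a b p 0

variable {a b} {p j : ℕ}

lemma compoundGen_nonneg : 0 ≤ compoundGen a b p j := by
  unfold compoundGen
  positivity

@[simp]
lemma compoundGen_zero_zero : compoundGen a b 0 0 = 1 := by
  simp [compoundGen]

lemma compoundGen_succ_of_le (hj : j ≤ p) :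
    compoundGen a b (p + 1) j = a (p + 1) * compoundGen a b p j := by
  rw [compoundGen, compoundGen, prod_Icc_succ_top (by omega)]
  ring

lemma compoundGen_succ_self :
    compoundGen a b (p + 1) (p + 1) = b (p + 1) * compoundGen a b p p := by
  simp only [compoundGen, Icc_eq_empty_of_lt (Nat.lt_succ_self _), prod_empty,
    prod_Icc_succ_top (Nat.le_add_left 1 p)]
  ring

lemma compoundGen_le_succ (hj : j + 1 ≤ p) (hab : a (j + 1) ≤ b (j + 1)) :
    compoundGen a b p j ≤ compoundGen a b p (j + 1) := by
  rw [compoundGen, compoundGen, prod_Icc_succ_top (by omega), ← mul_prod_Ioc_eq_prod_Icc hj,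
    ← Icc_add_one_left_eq_Ioc, mul_assoc]
  gcongr

lemma isCoprime_compoundGen_self (hab : ∀ j, 1 ≤ j → j ≤ p → Nat.gcd (a p) (b j) = 1) :
    IsCoprime (a p : ℤ) (compoundGen a b p p) := by
  rw [compoundGen, Icc_eq_empty_of_lt (Nat.lt_succ_self _), prod_empty, mul_one]
  refine IsCoprime.prod_right fun i hi => Nat.isCoprime_iff_coprime.mpr ?_
  exact hab i (mem_Icc.mp hi).1 (mem_Icc.mp hi).2

lemma compoundFrobenius_zero : compoundFrobenius a b 0 = -1 := by
  simp [compoundFrobenius]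

lemma compoundFrobenius_succ : compoundFrobenius a b (p + 1) =
    a (p + 1) * compoundFrobenius a b p + (a (p + 1) - 1) * compoundGen a b (p + 1) (p + 1) := by
  have hsum : ∑ j ∈ Icc 1 p, ((a j : ℤ) - 1) * compoundGen a b (p + 1) j
      = a (p + 1) * ∑ j ∈ Icc 1 p, ((a j : ℤ) - 1) * compoundGen a b p j := by
    rw [mul_sum]
    refine sum_congr rfl fun j hj => ?_
    rw [compoundGen_succ_of_le (mem_Icc.mp hj).2]
    ring
  rw [compoundFrobenius, compoundFrobenius, sum_Icc_succ_top (by omega), hsum,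
    compoundGen_succ_of_le (Nat.zero_le p)]
  ring

lemma compoundFrobenius_nonneg (hp : 1 ≤ p) (ha : ∀ i, 1 ≤ i → i ≤ p → 0 < a i) (ha₁ : 2 ≤ a 1)
    (hab₁ : a 1 ≤ b 1) : 0 ≤ compoundFrobenius a b p := by
  have hterm : ∀ j ∈ Icc 1 p, 0 ≤ ((a j : ℤ) - 1) * compoundGen a b p j := fun j hj => by
    have := ha j (mem_Icc.mp hj).1 (mem_Icc.mp hj).2
    exact mul_nonneg (by omega) compoundGen_nonneg
  have h₁ : ((a 1 : ℤ) - 1) * compoundGen a b p 1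
      ≤ ∑ j ∈ Icc 1 p, ((a j : ℤ) - 1) * compoundGen a b p j :=
    single_le_sum hterm (mem_Icc.mpr ⟨le_rfl, hp⟩)
  have h₀ : compoundGen a b p 0 ≤ compoundGen a b p 1 := compoundGen_le_succ hp hab₁
  have ha₁' : (1 : ℤ) ≤ a 1 - 1 := by omega
  rw [compoundFrobenius]
  nlinarith [compoundGen_nonneg (a := a) (b := b) (p := p) (j := 1)]

theorem isGreatest_compl_natCombinations_compoundGen (ha : ∀ i, 1 ≤ i → i ≤ p → 0 < a i)
    (hab : ∀ i j, 1 ≤ j → j ≤ i → i ≤ p → Nat.gcd (a i) (b j) = 1) :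
    IsGreatest (natCombinations (compoundGen a b p) p)ᶜ (compoundFrobenius a b p) := by
  induction p with
  | zero =>
    have hS : natCombinations (compoundGen a b 0) 0 = Set.Ici 0 := by
      ext m
      simp only [natCombinations, Set.mem_ofPred_eq, zero_add, sum_range_one,
        compoundGen_zero_zero, mul_one, Set.mem_Ici]
      exact ⟨fun ⟨x, hx⟩ => hx ▸ Int.natCast_nonneg _, fun hm => ⟨fun _ => m.toNat, by simpa⟩⟩
    rw [hS, compoundFrobenius_zero, Set.compl_Ici]
    exact ⟨by norm_num, fun m hm => by simp only [Set.mem_Iio] at hm; omega⟩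
  | succ p ih =>
    rw [natCombinations_succ fun j => compoundGen_succ_of_le, compoundFrobenius_succ]
    refine isGreatest_compl_glue (by exact_mod_cast ha _ (by omega) le_rfl) compoundGen_nonneg
      (isCoprime_compoundGen_self fun j h1 h2 => hab _ j h1 h2 le_rfl) (fun s hs r => ?_)
      (ih (fun i h1 h2 => ha i h1 (by omega)) fun i j h1 h2 _ => hab i j h1 h2 (by omega))
    rw [compoundGen_succ_self, ← mul_assoc]
    exact_mod_cast add_mul_mem_natCombinations hs le_rfl (r * b (p + 1))

end Compound

theorem stmt17 (p : ℕ) (hp : 1 ≤ p) (a b : ℕ → ℕ)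
    (ha : ∀ i, 1 ≤ i → i ≤ p → 2 ≤ a i ∧ a i < b i)
    (hab : ∀ i j, 1 ≤ j → j ≤ i → i ≤ p → Nat.gcd (a i) (b j) = 1)
    (n : ℕ → ℕ)
    (hn : ∀ i, i ≤ p → n i = (∏ j ∈ Finset.Icc 1 i, b j) * ∏ j ∈ Finset.Icc (i+1) p, a j) :
    IsGreatest {m : ℕ | ¬∃ x : ℕ → ℕ, ∑ j ∈ Finset.range (p+1), x j * n j = m}
      ((∑ j ∈ Finset.Icc 1 p, n j * (a j - 1)) - n 0) := by
  have ha₀ : ∀ i, 1 ≤ i → i ≤ p → 0 < a i := fun i h1 h2 => by have := ha i h1 h2; omega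
  have hgen : ∀ i ≤ p, (n i : ℤ) = compoundGen a b p i := fun i hi => by
    rw [hn i hi, compoundGen]
    push_cast
    rfl
  have hsum : ((∑ j ∈ Icc 1 p, n j * (a j - 1) : ℕ) : ℤ) = compoundFrobenius a b p + n 0 := by
    rw [compoundFrobenius, hgen 0 p.zero_le, sub_add_cancel, Nat.cast_sum]
    refine sum_congr rfl fun j hj => ?_
    obtain ⟨hj1, hjp⟩ := mem_Icc.mp hj
    rw [Nat.cast_mul, Nat.cast_sub (ha₀ j hj1 hjp), hgen j hjp, Nat.cast_one, mul_comm]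
  have hF := compoundFrobenius_nonneg hp ha₀ (ha 1 le_rfl hp).1 (ha 1 le_rfl hp).2.le
  have hfrob := isGreatest_compl_natCombinations_compoundGen ha₀ hab
  rw [← natCombinations_congr hgen, show compoundFrobenius a b p
    = ((∑ j ∈ Icc 1 p, n j * (a j - 1) - n 0 : ℕ) : ℤ) by omega] at hfrob
  simp only [← natCast_mem_natCombinations_iff]
  exact ⟨hfrob.1, fun m hm => by exact_mod_cast hfrob.2 hm⟩
end
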